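/- arXiv:2108.12417 — 3 statements merged into one kernel-verified Lean document; each statement's English description precedes it below -/
import Mathlib

section
/- For every non-negative integer n and i ≥ 0 with n < 2^i, the number of i-bit BSD representations of n having exactly ℓ zero digits equals the coefficient of t^ℓ in the Stern polynomial B_{2^i - n}(t). -/
open Polynomial in
/-- The Stern polynomial: `B 0 = 0`, `B 1 = 1`, `B (2n) = t * B n`, `B (2n+1) = B n + B (n+1)`. -/
noncomputable def sternP : ℕ → Polynomial ℕ
  | 0 => 0
  | 1 => 1
  | n + 2 =>
    if (n + 2) % 2 = 0 then X * sternP (n / 2 + 1)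
    else sternP (n / 2 + 1) + sternP (n / 2 + 2)
decreasing_by all_goals omega

/-- The digits of a BSD representation lie in {-1, 0, 1}. -/
def IsBSDDigits {i : ℕ} (b : Fin i → ℤ) : Prop := ∀ j, b j ∈ ({-1, 0, 1} : Set ℤ)

/-- The value represented by the digit string `b` (least significant digit `b 0`). -/
def bsdVal {i : ℕ} (b : Fin i → ℤ) : ℤ := ∑ j : Fin i, b j * 2 ^ (j : ℕ)

/-- `b` is a (not necessarily reduced) non-adjacent form digit string of length `k`:
digits in {-1,0,1}, no two adjacent digits both nonzero, and nonzero leading digit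
(when `k > 0`). -/
def IsReducedNAF {k : ℕ} (b : Fin k → ℤ) : Prop :=
  IsBSDDigits b ∧
  (∀ j : Fin k, ∀ h : (j : ℕ) + 1 < k, b j = 0 ∨ b ⟨(j : ℕ) + 1, h⟩ = 0) ∧
  (∀ h : 0 < k, b ⟨k - 1, Nat.sub_lt h one_pos⟩ ≠ 0)

/-- `m` has a reduced NAF representation of bitlength `k`. -/
def HasNAFLen (m : ℤ) (k : ℕ) : Prop :=
  ∃ b : Fin k → ℤ, IsReducedNAF b ∧ bsdVal b = m

/-- `I k`: the set of positive integers of NAF-bitlength `k`. -/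
def NAFInterval (k : ℕ) : Set ℕ := {n : ℕ | HasNAFLen (n : ℤ) k}

/-- `a k = min I k`: `a 1 = 1`, `a 2 = 2`, `a k = 2^(k-2) + a (k-2)`. -/
def aseq : ℕ → ℕ
  | 0 => 0
  | 1 => 1
  | 2 => 2
  | k + 3 => 2 ^ (k + 1) + aseq (k + 1)

/-- The NAF-bitlength of `n`. -/
noncomputable def nafLen (n : ℕ) : ℕ := sInf {k : ℕ | HasNAFLen (n : ℤ) k}

/-- The minimal Hamming weight of a BSD representation of `n` of length
equal to its NAF-bitlength. -/
noncomputable def minWeight (n : ℕ) : ℕ :=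
  sInf {w : ℕ | ∃ b : Fin (nafLen n) → ℤ,
    IsBSDDigits b ∧ bsdVal b = (n : ℤ) ∧ {j | b j ≠ 0}.ncard = w}

/-- `Z n`: the number of zeros in an optimal (minimal-weight) BSD representation of `n`
of length equal to its NAF-bitlength. -/
noncomputable def Zfun (n : ℕ) : ℕ := nafLen n - minWeight n

/-- `M n`: the number of optimal (minimal-weight) BSD representations of `n`
of length equal to its NAF-bitlength. -/
noncomputable def Mfun (n : ℕ) : ℕ :=
  {b : Fin (nafLen n) → ℤ |
    IsBSDDigits b ∧ bsdVal b = (n : ℤ) ∧ {j | b j ≠ 0}.ncard = minWeight n}.ncard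

/-! Strip the least significant digit. A representation of `2m` has lowest digit `0` above a
representation of `m`; one of `2m + 1` has lowest digit `1` above a representation of `m`, or `-1`
above one of `m + 1`. Under `n ↦ 2^i - n` this is exactly the Stern recursion:
`2^(i+1) - 2m = 2 (2^i - m)` and `2^(i+1) - (2m + 1) = 2 (2^i - (m + 1)) + 1`, and the zero digit
accounts for the factor `t`. The range `n ≤ 2^i` (rather than `n < 2^i`) is what makes the
induction close, `n = 2^i` having no representation and `B_0 = 0`. -/

open Polynomial

lemma sternP_two_mul (m : ℕ) : sternP (2 * m) = X * sternP m := by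
  rcases m with _ | m
  · simp [sternP]
  · rw [show 2 * (m + 1) = 2 * m + 2 by ring, sternP,
      if_pos (by omega), show 2 * m / 2 + 1 = m + 1 by omega]

lemma sternP_two_mul_add_one (m : ℕ) : sternP (2 * m + 1) = sternP m + sternP (m + 1) := by
  rcases m with _ | m
  · simp [sternP]
  · rw [show 2 * (m + 1) + 1 = (2 * m + 1) + 2 by ring, sternP, if_neg (by omega),
      show (2 * m + 1) / 2 + 1 = m + 1 by omega, show (2 * m + 1) / 2 + 2 = m + 2 by omega]

def bsdReps (i : ℕ) (n : ℤ) (ℓ : ℕ) : Set (Fin i → ℤ) :=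
  {b | IsBSDDigits b ∧ bsdVal b = n ∧ {j | b j = 0}.ncard = ℓ}

section Digits

variable {i : ℕ}

lemma isBSDDigits_cons {c : ℤ} {b : Fin i → ℤ} :
    IsBSDDigits (Fin.cons c b : Fin (i + 1) → ℤ) ↔ c ∈ ({-1, 0, 1} : Set ℤ) ∧ IsBSDDigits b :=
  Fin.forall_fin_succ

lemma bsdVal_cons (c : ℤ) (b : Fin i → ℤ) :
    bsdVal (Fin.cons c b : Fin (i + 1) → ℤ) = c + 2 * bsdVal b := by
  simp only [bsdVal, Fin.sum_univ_succ, Fin.cons_zero, Fin.cons_succ, Fin.val_zero, Fin.val_succ,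
    pow_zero, mul_one, Finset.mul_sum, pow_succ]
  congr 1
  exact Finset.sum_congr rfl fun _ _ => by ring

lemma ncard_cons_eq_zero (c : ℤ) (b : Fin i → ℤ) :
    {j | (Fin.cons c b : Fin (i + 1) → ℤ) j = 0}.ncard
      = (if c = 0 then 1 else 0) + {j | b j = 0}.ncard := by
  simp only [Set.ncard_eq_toFinset_card', Set.toFinset_ofPred, Finset.card_filter,
    Fin.sum_univ_succ, Fin.cons_zero, Fin.cons_succ]

lemma mem_bsdReps_succ {n : ℤ} {ℓ : ℕ} {b : Fin (i + 1) → ℤ} :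
    b ∈ bsdReps (i + 1) n ℓ ↔ b 0 ∈ ({-1, 0, 1} : Set ℤ) ∧ IsBSDDigits (Fin.tail b) ∧
      b 0 + 2 * bsdVal (Fin.tail b) = n ∧
      (if b 0 = 0 then 1 else 0) + {j | Fin.tail b j = 0}.ncard = ℓ := by
  conv_lhs => rw [← Fin.cons_self_tail b]
  simp only [bsdReps, Set.mem_ofPred_eq, isBSDDigits_cons, bsdVal_cons, ncard_cons_eq_zero,
    and_assoc]

lemma bsdReps_finite (n : ℤ) (ℓ : ℕ) : (bsdReps i n ℓ).Finite :=
  (Set.Finite.pi' fun _ => Set.toFinite ({-1, 0, 1} : Set ℤ)).subset fun _ hb => hb.1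

end Digits

section LeastDigit

variable {i : ℕ} {m : ℤ} {ℓ : ℕ}

lemma image_cons_bsdReps {c : ℤ} (hc : c ∈ ({-1, 0, 1} : Set ℤ)) :
    Fin.cons c '' bsdReps i m ℓ
      = {b | b ∈ bsdReps (i + 1) (c + 2 * m) ((if c = 0 then 1 else 0) + ℓ) ∧ b 0 = c} := by
  ext b
  constructor
  · rintro ⟨x, ⟨hd, hv, hz⟩, rfl⟩
    simpa [mem_bsdReps_succ, hd, hv, hz] using hc
  · rintro ⟨hb, h0⟩
    rw [mem_bsdReps_succ, h0] at hb
    obtain ⟨-, hd, hv, hz⟩ := hb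
    exact ⟨Fin.tail b, ⟨hd, by linarith, by omega⟩, h0 ▸ Fin.cons_self_tail b⟩

lemma bsdReps_two_mul_zero : bsdReps (i + 1) (2 * m) 0 = ∅ := by
  refine Set.eq_empty_of_forall_notMem fun b hb => ?_
  rw [mem_bsdReps_succ] at hb
  obtain ⟨h0, -, hv, hz⟩ := hb
  simp only [Set.mem_insert_iff, Set.mem_singleton_iff] at h0
  split_ifs at hz <;> omega

lemma bsdReps_two_mul_succ : bsdReps (i + 1) (2 * m) (ℓ + 1) = Fin.cons 0 '' bsdReps i m ℓ := by
  rw [image_cons_bsdReps (by simp), if_pos rfl, zero_add, add_comm 1 ℓ]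
  ext b
  refine ⟨fun hb => ⟨hb, ?_⟩, And.left⟩
  rw [mem_bsdReps_succ] at hb
  obtain ⟨h0, -, hv, -⟩ := hb
  simp only [Set.mem_insert_iff, Set.mem_singleton_iff] at h0
  omega

lemma bsdReps_two_mul_add_one :
    bsdReps (i + 1) (2 * m + 1) ℓ
      = Fin.cons 1 '' bsdReps i m ℓ ∪ Fin.cons (-1) '' bsdReps i (m + 1) ℓ := by
  rw [image_cons_bsdReps (by simp), image_cons_bsdReps (by simp), if_neg one_ne_zero,
    if_neg (by norm_num), zero_add, show (1 : ℤ) + 2 * m = 2 * m + 1 by ring,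
    show -1 + 2 * (m + 1) = 2 * m + 1 by ring, ← Set.sep_or]
  ext b
  refine ⟨fun hb => ⟨hb, ?_⟩, And.left⟩
  rw [mem_bsdReps_succ] at hb
  obtain ⟨h0, -, hv, -⟩ := hb
  simp only [Set.mem_insert_iff, Set.mem_singleton_iff] at h0
  omega

lemma ncard_bsdReps_two_mul_add_one :
    (bsdReps (i + 1) (2 * m + 1) ℓ).ncard
      = (bsdReps i m ℓ).ncard + (bsdReps i (m + 1) ℓ).ncard := by
  have hdisj : Disjoint (α := Set (Fin (i + 1) → ℤ))
      (Fin.cons 1 '' bsdReps i m ℓ) (Fin.cons (-1) '' bsdReps i (m + 1) ℓ) := by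
    rw [Set.disjoint_left]
    rintro _ ⟨x, -, rfl⟩ ⟨y, -, hxy⟩
    exact absurd (Fin.cons_inj.1 hxy).1 (by norm_num)
  rw [bsdReps_two_mul_add_one, Set.ncard_union_eq hdisj ((bsdReps_finite _ _).image _)
      ((bsdReps_finite _ _).image _), Set.ncard_image_of_injective _ (Fin.cons_right_injective _),
    Set.ncard_image_of_injective _ (Fin.cons_right_injective _)]

end LeastDigit

lemma ncard_bsdReps_zero (n : ℤ) (ℓ : ℕ) :
    (bsdReps 0 n ℓ).ncard = if n = 0 ∧ ℓ = 0 then 1 else 0 := by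
  have hval (b : Fin 0 → ℤ) : bsdVal b = 0 := by simp [bsdVal]
  split_ifs with h
  · obtain ⟨rfl, rfl⟩ := h
    rw [show bsdReps 0 0 0 = Set.univ from Set.eq_univ_of_forall fun b =>
      ⟨finZeroElim, hval b, by simp [Set.eq_empty_of_isEmpty]⟩, Set.ncard_univ, Nat.card_unique]
  · rw [Set.ncard_eq_zero (bsdReps_finite n ℓ)]
    refine Set.eq_empty_of_forall_notMem fun b hb => h ?_
    obtain ⟨-, hv, hz⟩ := hb
    exact ⟨hv ▸ hval b, by simp [← hz, Set.eq_empty_of_isEmpty]⟩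

theorem ncard_bsdReps_eq_coeff_sternP (i n ℓ : ℕ) (h : n ≤ 2 ^ i) :
    (bsdReps i n ℓ).ncard = (sternP (2 ^ i - n)).coeff ℓ := by
  induction i generalizing n ℓ with
  | zero =>
    rw [ncard_bsdReps_zero]
    obtain rfl | rfl : n = 0 ∨ n = 1 := by omega
    · simp [sternP, coeff_one]
    · simp [sternP]
  | succ i ih =>
    obtain ⟨m, rfl | rfl⟩ := Nat.even_or_odd' n
    · rw [show 2 ^ (i + 1) - 2 * m = 2 * (2 ^ i - m) by omega, sternP_two_mul, Nat.cast_mul,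
        Nat.cast_two]
      rcases ℓ with _ | ℓ
      · rw [bsdReps_two_mul_zero, Set.ncard_empty, coeff_X_mul_zero]
      · rw [bsdReps_two_mul_succ, Set.ncard_image_of_injective _ (Fin.cons_right_injective _),
          coeff_X_mul, ih m ℓ (by omega)]
    · have hm1 := ih (m + 1) ℓ (by omega)
      push_cast at hm1 ⊢
      rw [show 2 ^ (i + 1) - (2 * m + 1) = 2 * (2 ^ i - (m + 1)) + 1 by omega,
        sternP_two_mul_add_one, show 2 ^ i - (m + 1) + 1 = 2 ^ i - m by omega, coeff_add,
        ncard_bsdReps_two_mul_add_one, ih m ℓ (by omega), hm1, add_comm]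

theorem bsd_weight_distribution (n i ℓ : ℕ) (h : n < 2 ^ i) :
    {b : Fin i → ℤ | IsBSDDigits b ∧ bsdVal b = (n : ℤ) ∧
        {j | b j = 0}.ncard = ℓ}.ncard
      = (sternP (2 ^ i - n)).coeff ℓ :=
  ncard_bsdReps_eq_coeff_sternP i n ℓ h.le
end

section
/- For every non-negative integer n and ℓ ≥ 0, the number of hyperbinary representations of n having exactly ℓ digits equal to 1 equals the coefficient of t^ℓ in the Stern polynomial B_{n+1}(t). -/
/-!
Split a hyperbinary representation of `n` into its lowest digit `d` and the representation
of `(n - d) / 2` formed by the remaining digits. For `n = 2m + 1` the digit is forced to be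
`d = 1`, which contributes one more digit `1` (a factor `t`), and for `n = 2m + 2` it is `d = 0`
or `d = 2`, leaving a representation of `m + 1` or of `m` with the same number of ones. These are
exactly the recursions `B (2m + 2) = t B (m + 1)` and `B (2m + 3) = B (m + 1) + B (m + 2)`.
-/

open Polynomial

lemma sternP_one : sternP 1 = 1 := by
  rw [sternP]

lemma sternP_even (m : ℕ) : sternP (2 * m + 2) = X * sternP (m + 1) := by
  rw [sternP, if_pos (by omega), Nat.mul_div_cancel_left m two_pos]

lemma sternP_odd (m : ℕ) : sternP (2 * m + 3) = sternP (m + 1) + sternP (m + 2) := by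
  rw [sternP, if_neg (by omega), show (2 * m + 1) / 2 = m by omega]

lemma Set.ncard_eq_ite_add_ncard_preimage_succ {s : Set ℕ} [Decidable (0 ∈ s)] (hs : s.Finite) :
    s.ncard = (if 0 ∈ s then 1 else 0) + (Nat.succ ⁻¹' s).ncard := by
  have hdiff : s \ {0} = Nat.succ '' (Nat.succ ⁻¹' s) := by
    rw [Set.image_preimage_eq_inter_range, Nat.range_succ]
    ext j
    simp [Nat.pos_iff_ne_zero]
  rw [← Set.ncard_inter_add_ncard_sdiff_eq_ncard s {0} hs, hdiff,
    Set.ncard_image_of_injective _ Nat.succ_injective]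
  split_ifs with h0 <;> simp [h0]

namespace Hyperbinary

def val (h : ℕ →₀ ℕ) : ℕ := h.sum fun j a => a * 2 ^ j

noncomputable def numOnes (h : ℕ →₀ ℕ) : ℕ := {j | h j = 1}.ncard

def reps (n ℓ : ℕ) : Set (ℕ →₀ ℕ) := {h | (∀ j, h j ≤ 2) ∧ val h = n ∧ numOnes h = ℓ}

@[simp] lemma numOnes_zero : numOnes 0 = 0 := by
  simp [numOnes]

lemma val_eq_zero_iff {h : ℕ →₀ ℕ} : val h = 0 ↔ h = 0 := by
  refine ⟨fun hv => ?_, by rintro rfl; simp [val]⟩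
  ext j
  by_contra hj
  have := Finset.sum_eq_zero_iff.1 hv j (Finsupp.mem_support_iff.2 hj)
  simp_all

noncomputable def cons (d : ℕ) (h : ℕ →₀ ℕ) : ℕ →₀ ℕ :=
  Finsupp.single 0 d + h.embDomain (addRightEmbedding 1)

@[simp] lemma cons_apply_zero (d : ℕ) (h : ℕ →₀ ℕ) : cons d h 0 = d := by
  simp [cons, Finsupp.embDomain_of_notMem_range]

@[simp] lemma cons_apply_succ (d : ℕ) (h : ℕ →₀ ℕ) (j : ℕ) : cons d h (j + 1) = h j := by
  rw [cons, Finsupp.add_apply, Finsupp.single_eq_of_ne (by omega), zero_add]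
  exact Finsupp.embDomain_apply_self (addRightEmbedding 1) h j

lemma exists_cons_eq (h : ℕ →₀ ℕ) : ∃ d k, cons d k = h :=
  ⟨h 0, h.comapDomain (· + 1) (add_left_injective 1).injOn, by ext (_ | j) <;> simp⟩

@[simp] lemma cons_inj {d d' : ℕ} {h h' : ℕ →₀ ℕ} : cons d h = cons d' h' ↔ d = d' ∧ h = h' := by
  refine ⟨fun hc => ⟨by simpa using DFunLike.congr_fun hc 0, ?_⟩, by rintro ⟨rfl, rfl⟩; rfl⟩
  ext j
  simpa using DFunLike.congr_fun hc (j + 1)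

lemma cons_injective (d : ℕ) : Function.Injective (cons d) := fun _ _ h => (cons_inj.1 h).2

lemma val_cons (d : ℕ) (h : ℕ →₀ ℕ) : val (cons d h) = d + 2 * val h := by
  rw [val, cons, Finsupp.sum_add_index' (by simp) (by intros; ring),
    Finsupp.sum_single_index (by simp), Finsupp.sum_embDomain, val, Finsupp.mul_sum]
  simp [pow_succ, mul_comm, mul_left_comm]

lemma numOnes_cons (d : ℕ) (h : ℕ →₀ ℕ) :
    numOnes (cons d h) = (if d = 1 then 1 else 0) + numOnes h := by
  rw [numOnes, Set.ncard_eq_ite_add_ncard_preimage_succ]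
  · simp [numOnes]
  · exact (cons d h).support.finite_toSet.subset fun j hj => by simp_all

lemma disjoint_image_cons {d d' : ℕ} (hd : d ≠ d') (s t : Set (ℕ →₀ ℕ)) :
    Disjoint (cons d '' s) (cons d' '' t) :=
  Set.disjoint_left.2 fun _ ⟨_, _, hk⟩ ⟨_, _, hk'⟩ => hd (cons_inj.1 (hk.trans hk'.symm)).1

lemma forall_cons_apply_le_two {d : ℕ} {h : ℕ →₀ ℕ} :
    (∀ j, cons d h j ≤ 2) ↔ d ≤ 2 ∧ ∀ j, h j ≤ 2 := by
  refine ⟨fun hc => ⟨by simpa using hc 0, fun j => by simpa using hc (j + 1)⟩, ?_⟩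
  rintro ⟨hd, hh⟩ (_ | j) <;> simp [hd, hh]

lemma cons_mem_reps {d n ℓ : ℕ} {h : ℕ →₀ ℕ} :
    cons d h ∈ reps n ℓ ↔
      d ≤ 2 ∧ (∀ j, h j ≤ 2) ∧ d + 2 * val h = n ∧ (if d = 1 then 1 else 0) + numOnes h = ℓ := by
  simp only [reps, Set.mem_ofPred_eq, forall_cons_apply_le_two, val_cons, numOnes_cons, and_assoc]

lemma reps_zero_zero : reps 0 0 = {0} := by
  ext h
  simp only [reps, Set.mem_ofPred_eq, val_eq_zero_iff, Set.mem_singleton_iff]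
  exact ⟨fun hh => hh.2.1, by rintro rfl; simp⟩

lemma reps_zero_succ (ℓ : ℕ) : reps 0 (ℓ + 1) = ∅ := by
  ext h
  simp only [reps, Set.mem_ofPred_eq, val_eq_zero_iff, Set.mem_empty_iff_false, iff_false]
  rintro ⟨-, rfl, h0⟩
  simp at h0

lemma reps_odd (m ℓ : ℕ) : reps (2 * m + 1) (ℓ + 1) = cons 1 '' reps m ℓ := by
  ext h
  obtain ⟨d, k, rfl⟩ := exists_cons_eq h
  simp only [cons_mem_reps, Set.mem_image, cons_inj, exists_eq_right_right]
  simp only [reps, Set.mem_ofPred_eq]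
  grind

lemma reps_odd_zero (m : ℕ) : reps (2 * m + 1) 0 = ∅ := by
  ext h
  obtain ⟨d, k, rfl⟩ := exists_cons_eq h
  simp only [cons_mem_reps, Set.mem_empty_iff_false, iff_false]
  grind

lemma reps_even (m ℓ : ℕ) :
    reps (2 * m + 2) ℓ = cons 0 '' reps (m + 1) ℓ ∪ cons 2 '' reps m ℓ := by
  ext h
  obtain ⟨d, k, rfl⟩ := exists_cons_eq h
  simp only [cons_mem_reps, Set.mem_union, Set.mem_image, cons_inj, exists_eq_right_right]
  simp only [reps, Set.mem_ofPred_eq]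
  grind

/-- Counting with `encard` makes the recursion additive without finiteness side conditions. -/
theorem encard_reps (n ℓ : ℕ) : (reps n ℓ).encard = (sternP (n + 1)).coeff ℓ := by
  induction n using Nat.strong_induction_on generalizing ℓ with
  | _ n ih =>
  obtain ⟨m, rfl | rfl⟩ := n.even_or_odd'
  · rcases m with _ | m
    · rcases ℓ with _ | ℓ <;> simp [reps_zero_zero, reps_zero_succ, sternP_one, coeff_one]
    · rw [show 2 * (m + 1) = 2 * m + 2 by ring, reps_even,
        Set.encard_union_eq (disjoint_image_cons (by simp) _ _), (cons_injective 0).encard_image,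
        (cons_injective 2).encard_image, ih _ (by omega), ih _ (by omega), sternP_odd, coeff_add,
        Nat.cast_add, add_comm]
  · rw [sternP_even]
    rcases ℓ with _ | ℓ
    · simp [reps_odd_zero]
    · rw [reps_odd, (cons_injective 1).encard_image, ih m (by omega), coeff_X_mul]

theorem ncard_reps (n ℓ : ℕ) : (reps n ℓ).ncard = (sternP (n + 1)).coeff ℓ := by
  rw [Set.ncard_def, encard_reps, ENat.toNat_natCast]

end Hyperbinary

theorem hyperbinary_ones_stern_coeff (n ℓ : ℕ) :
    {h : ℕ →₀ ℕ | (∀ j, h j ≤ 2) ∧ (h.sum fun j a => a * 2 ^ j) = n ∧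
        {j | h j = 1}.ncard = ℓ}.ncard
      = (sternP (n + 1)).coeff ℓ :=
  Hyperbinary.ncard_reps n ℓ
end

section
/- The NAF of a positive integer n has minimal Hamming weight among all BSD representations of n: if (b_{i-1},...,b_0) is any BSD representation of n with digits in {-1,0,1}, then its number of nonzero digits is at least the number of nonzero digits in the reduced NAF of n. -/
/-! `nafWeight m` is the number of nonzero digits of the NAF of `m`, computed along the recursion
that produces the NAF. A BSD string is read from its least significant digit as `m ↦ e + 2 * m`,
and this step raises `nafWeight` by at most `|e|`: the heart of the matter is
`nafWeight (2 * m + 1) ≤ 1 + nafWeight m`, proved by induction along the NAF recursion itself.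
So no BSD representation of `n` has fewer than `nafWeight n` nonzero digits, while a non-adjacent
one, whose digits the recursion reproduces, has exactly that many. -/

def nafWeight (m : ℤ) : ℕ :=
  if m = 0 then 0
  else if m % 2 = 0 then nafWeight (m / 2)
  -- the NAF of an odd `m` ends in the digits `0, d` with `d ≡ m [ZMOD 4]`,
  -- and `(m - d) / 4 = (m + 1) / 4`
  else 1 + nafWeight ((m + 1) / 4)
termination_by m.natAbs
decreasing_by all_goals omega

@[simp]
lemma nafWeight_zero : nafWeight 0 = 0 := by
  rw [nafWeight]; simp

@[simp]
lemma nafWeight_two_mul (m : ℤ) : nafWeight (2 * m) = nafWeight m := by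
  rcases eq_or_ne m 0 with rfl | hm
  · simp
  · rw [nafWeight, if_neg (by omega), if_pos (by omega), Int.mul_ediv_cancel_left _ two_ne_zero]

lemma nafWeight_four_mul_add_one (m : ℤ) : nafWeight (4 * m + 1) = 1 + nafWeight m := by
  rw [nafWeight, if_neg (by omega), if_neg (by omega)]
  congr 2
  omega

lemma nafWeight_four_mul_sub_one (m : ℤ) : nafWeight (4 * m - 1) = 1 + nafWeight m := by
  rw [nafWeight, if_neg (by omega), if_neg (by omega)]
  congr 2
  omega

theorem Int.induction_on_naf {P : ℤ → Prop} (zero : P 0)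
    (two_mul : ∀ m ≠ 0, P m → P (2 * m)) (four_mul_add_one : ∀ m, P m → P (4 * m + 1))
    (four_mul_sub_one : ∀ m, P m → P (4 * m - 1)) (m : ℤ) : P m := by
  induction h : m.natAbs using Nat.strong_induction_on generalizing m with
  | _ N ih =>
    subst h
    rcases eq_or_ne m 0 with rfl | hm
    · exact zero
    obtain ⟨k, rfl | rfl | rfl⟩ : ∃ k, m = 2 * k ∨ m = 4 * k + 1 ∨ m = 4 * k - 1 :=
      ⟨if m % 2 = 0 then m / 2 else (m + 1) / 4, by split_ifs <;> omega⟩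
    · exact two_mul k (by omega) (ih _ (by omega) k rfl)
    · exact four_mul_add_one k (ih _ (by omega) k rfl)
    · exact four_mul_sub_one k (ih _ (by omega) k rfl)

@[simp]
lemma nafWeight_neg (m : ℤ) : nafWeight (-m) = nafWeight m := by
  induction m using Int.induction_on_naf with
  | zero => simp
  | two_mul m _ ih => rw [← mul_neg, nafWeight_two_mul, nafWeight_two_mul, ih]
  | four_mul_add_one m ih =>
    rw [show -(4 * m + 1) = 4 * -m - 1 by ring, nafWeight_four_mul_sub_one,
      nafWeight_four_mul_add_one, ih]
  | four_mul_sub_one m ih =>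
    rw [show -(4 * m - 1) = 4 * -m + 1 by ring, nafWeight_four_mul_add_one,
      nafWeight_four_mul_sub_one, ih]

lemma nafWeight_two_mul_add_one_le (m : ℤ) : nafWeight (2 * m + 1) ≤ 1 + nafWeight m := by
  induction m using Int.induction_on_naf with
  | zero => simpa using (nafWeight_four_mul_add_one 0).le
  | two_mul m _ _ =>
    rw [← mul_assoc, show (2 : ℤ) * 2 = 4 by norm_num, nafWeight_four_mul_add_one,
      nafWeight_two_mul]
  | four_mul_add_one m ih =>
    rw [show 2 * (4 * m + 1) + 1 = 4 * (2 * m + 1) - 1 by ring, nafWeight_four_mul_sub_one,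
      nafWeight_four_mul_add_one]
    omega
  | four_mul_sub_one m _ =>
    rw [show 2 * (4 * m - 1) + 1 = 4 * (2 * m) - 1 by ring, nafWeight_four_mul_sub_one,
      nafWeight_four_mul_sub_one, nafWeight_two_mul]
    omega

lemma nafWeight_two_mul_sub_one_le (m : ℤ) : nafWeight (2 * m - 1) ≤ 1 + nafWeight m := by
  rw [show 2 * m - 1 = -(2 * -m + 1) by ring, nafWeight_neg, ← nafWeight_neg m]
  exact nafWeight_two_mul_add_one_le (-m)

lemma nafWeight_digit_add_two_mul_le {e : ℤ} (he : e ∈ ({-1, 0, 1} : Set ℤ)) (m : ℤ) :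
    nafWeight (e + 2 * m) ≤ (if e = 0 then 0 else 1) + nafWeight m := by
  rcases he with rfl | rfl | rfl
  · simpa [add_comm, ← sub_eq_neg_add] using nafWeight_two_mul_sub_one_le m
  · simp
  · simpa [add_comm] using nafWeight_two_mul_add_one_le m

lemma bsdVal_succ {i : ℕ} (b : Fin (i + 1) → ℤ) :
    bsdVal b = b 0 + 2 * bsdVal (Fin.tail b) := by
  simp only [bsdVal, Fin.sum_univ_succ, Finset.mul_sum, Fin.tail, Fin.val_zero, Fin.val_succ,
    pow_succ]
  ring_nf

lemma hammingNorm_succ {M : Type*} [Zero M] [DecidableEq M] {i : ℕ}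
    (b : Fin (i + 1) → M) :
    hammingNorm b = (if b 0 = 0 then 0 else 1) + hammingNorm (Fin.tail b) := by
  simp only [hammingNorm, Finset.card_filter, Fin.sum_univ_succ, ite_not]
  rfl

lemma nafWeight_bsdVal_le_hammingNorm {i : ℕ} {b : Fin i → ℤ} (hb : IsBSDDigits b) :
    nafWeight (bsdVal b) ≤ hammingNorm b := by
  induction i with
  | zero => simp [bsdVal]
  | succ i ih =>
    rw [bsdVal_succ, hammingNorm_succ]
    exact (nafWeight_digit_add_two_mul_le (hb 0) _).trans
      (Nat.add_le_add_left (ih fun j => hb j.succ) _)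

def IsNonAdjacent {k : ℕ} (c : Fin k → ℤ) : Prop :=
  ∀ j : Fin k, ∀ h : (j : ℕ) + 1 < k, c j = 0 ∨ c ⟨(j : ℕ) + 1, h⟩ = 0

namespace IsNonAdjacent

variable {k : ℕ} {c : Fin (k + 1) → ℤ}

lemma tail (h : IsNonAdjacent c) : IsNonAdjacent (Fin.tail c) :=
  fun j hj => h j.succ (by simpa using hj)

lemma two_dvd_bsdVal_tail (h : IsNonAdjacent c) (h0 : c 0 ≠ 0) : 2 ∣ bsdVal (Fin.tail c) := by
  cases k with
  | zero => simp [bsdVal]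
  | succ k =>
    have h1 : Fin.tail c 0 = 0 := (h 0 (by simp)).resolve_left h0
    simp [bsdVal_succ, h1]

end IsNonAdjacent

lemma hammingNorm_eq_nafWeight_bsdVal {k : ℕ} {c : Fin k → ℤ} (hd : IsBSDDigits c)
    (h : IsNonAdjacent c) : hammingNorm c = nafWeight (bsdVal c) := by
  induction k with
  | zero => simp [bsdVal, hammingNorm]
  | succ k ih =>
    rw [bsdVal_succ, hammingNorm_succ, ih (c := Fin.tail c) (fun j => hd j.succ) h.tail]
    obtain h0 | h0 | h0 : c 0 = -1 ∨ c 0 = 0 ∨ c 0 = 1 := hd 0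
    · obtain ⟨t, ht⟩ := h.two_dvd_bsdVal_tail (by simp [h0])
      rw [ht, h0, show -1 + 2 * (2 * t) = 4 * t - 1 by ring, nafWeight_four_mul_sub_one,
        nafWeight_two_mul]
      rfl
    · simp [h0]
    · obtain ⟨t, ht⟩ := h.two_dvd_bsdVal_tail (by simp [h0])
      rw [ht, h0, show 1 + 2 * (2 * t) = 4 * t + 1 by ring, nafWeight_four_mul_add_one,
        nafWeight_two_mul]
      rfl

lemma ncard_ne_zero_eq_hammingNorm {ι M : Type*} [Fintype ι] [Zero M] [DecidableEq M]
    (c : ι → M) : {j | c j ≠ 0}.ncard = hammingNorm c := by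
  simp [hammingNorm, ← Set.ncard_coe_finset]

theorem naf_minimal_weight_general (n i k : ℕ)
    (b : Fin i → ℤ) (hb : IsBSDDigits b) (hbv : bsdVal b = (n : ℤ))
    (c : Fin k → ℤ) (hc : IsReducedNAF c) (hcv : bsdVal c = (n : ℤ)) :
    {j | c j ≠ 0}.ncard ≤ {j | b j ≠ 0}.ncard := by
  rw [ncard_ne_zero_eq_hammingNorm, ncard_ne_zero_eq_hammingNorm,
    hammingNorm_eq_nafWeight_bsdVal hc.1 hc.2.1, hcv, ← hbv]
  exact nafWeight_bsdVal_le_hammingNorm hb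

theorem naf_minimal_weight (n i k : ℕ) (hn : 0 < n)
    (b : Fin i → ℤ) (hb : IsBSDDigits b) (hbv : bsdVal b = (n : ℤ))
    (c : Fin k → ℤ) (hc : IsReducedNAF c) (hcv : bsdVal c = (n : ℤ)) :
    {j | c j ≠ 0}.ncard ≤ {j | b j ≠ 0}.ncard :=
  naf_minimal_weight_general n i k b hb hbv c hc hcv
end
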